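/- For every M ≥ 1 there is a constant c = c(M) such that for all real β with M^{-1} ≤ β ≤ M, all integers n ≥ 1, and all real r with |r| ≤ 3 and n + r ≥ −1/(2M²): ∫_0^∞ (x − n)² x^r · x^{n+β−1} e^{−x} / Γ(n+β) dx ≤ c · n^{1+r}. Equivalently, if Γ_n is a Gamma random variable with shape n + β and scale 1, then E((Γ_n − n)² Γ_n^r) ≤ c n (max(n,1))^r. -/

import Mathlib

open MeasureTheory

lemma gamma_step (x u : ℝ) (hx : 0 < x) (hu0 : 0 ≤ u) (hu3 : u ≤ 3) :
    Real.Gamma (x + u) ≤ Real.Gamma x * (x + 2) ^ u := by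
  have hG : 0 < Real.Gamma x := Real.Gamma_pos_of_pos hx
  have h3 : Real.Gamma (x + 3) = x * (x + 1) * (x + 2) * Real.Gamma x := by
    rw [show x + 3 = (x + 2) + 1 by ring, Real.Gamma_add_one (by positivity),
      show x + 2 = (x + 1) + 1 by ring, Real.Gamma_add_one (by positivity),
      Real.Gamma_add_one hx.ne']
    ring
  have hx2 : (0:ℝ) < x + 2 := by linarith
  have hcube : x * (x + 1) * (x + 2) ≤ (x + 2) ^ (3:ℕ) := by nlinarith
  rcases eq_or_lt_of_le hu0 with h0 | h0
  · simp [← h0]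
  rcases eq_or_lt_of_le hu3 with h33 | h33
  · rw [h33, h3]
    calc x * (x + 1) * (x + 2) * Real.Gamma x ≤ (x + 2) ^ (3:ℕ) * Real.Gamma x :=
          mul_le_mul_of_nonneg_right hcube hG.le
      _ = Real.Gamma x * (x + 2) ^ (3:ℝ) := by
          rw [show ((3:ℝ)) = ((3:ℕ):ℝ) by norm_num, Real.rpow_natCast]; ring
  have key := Real.Gamma_mul_add_mul_le_rpow_Gamma_mul_rpow_Gamma (s := x) (t := x + 3)
    (a := 1 - u/3) (b := u/3) hx (by linarith) (by linarith) (by linarith) (by ring)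
  rw [show (1 - u/3) * x + (u/3) * (x + 3) = x + u by ring] at key
  refine key.trans ?_
  have hb : Real.Gamma (x + 3) ^ (u/3) ≤ ((x + 2) ^ (3:ℕ) * Real.Gamma x) ^ (u/3) := by
    apply Real.rpow_le_rpow (Real.Gamma_pos_of_pos (by linarith)).le _ (by linarith)
    rw [h3]; exact mul_le_mul_of_nonneg_right hcube hG.le
  calc Real.Gamma x ^ (1 - u/3) * Real.Gamma (x + 3) ^ (u/3)
      ≤ Real.Gamma x ^ (1 - u/3) * (((x + 2) ^ (3:ℕ) * Real.Gamma x) ^ (u/3)) := by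
        exact mul_le_mul_of_nonneg_left hb (Real.rpow_nonneg hG.le _)
    _ = Real.Gamma x * (x + 2) ^ u := by
        rw [Real.mul_rpow (by positivity) hG.le, ← Real.rpow_natCast (x+2) 3,
          ← Real.rpow_mul hx2.le]
        rw [show ((3:ℕ):ℝ) * (u/3) = u by ring]
        rw [show Real.Gamma x ^ (1 - u/3) * ((x+2)^u * Real.Gamma x ^ (u/3))
            = (Real.Gamma x ^ (1 - u/3) * Real.Gamma x ^ (u/3)) * (x+2)^u by ring,
          ← Real.rpow_add hG]
        norm_num


lemma cube_aux (M a t : ℝ) (hM : 1 ≤ M) (ht0 : 0 < t) (ha0 : 0 < a)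
    (hMa : 1 ≤ 2 * M * a) (hat : t - 3 < a) :
    t ^ (3:ℕ) ≤ 1728 * M * (a * (a + 1) * (a + 2)) := by
  rcases le_or_gt 4 t with h4 | h4
  · have haq : t/4 ≤ a := by linarith
    have hq : (0:ℝ) ≤ t/4 := by positivity
    have m1 : t/4 * (t/4) ≤ a * (a+1) := mul_le_mul haq (by linarith) hq (by linarith)
    have m2 : t/4 * (t/4) * (t/4) ≤ a * (a+1) * (a+2) :=
      mul_le_mul m1 (by linarith) hq (by nlinarith [ha0])
    nlinarith [m2, mul_pos (mul_pos ha0 (show (0:ℝ) < a+1 by linarith))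
      (show (0:ℝ) < a+2 by linarith), pow_nonneg ht0.le 3]
  · have h64 : t ^ (3:ℕ) ≤ 64 := by
      nlinarith [mul_nonneg (mul_nonneg (sub_nonneg.mpr h4.le) ht0.le) ht0.le,
        mul_nonneg (sub_nonneg.mpr h4.le) ht0.le]
    have hpa : 2 * a ≤ a * (a+1) * (a+2) := by
      nlinarith [mul_nonneg (mul_nonneg ha0.le ha0.le) (show (0:ℝ) ≤ a+3 by linarith)]
    have hMP := mul_le_mul_of_nonneg_left hpa (show (0:ℝ) ≤ M by linarith)
    nlinarith [hMP, hMa, h64]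

lemma gamma_ratio_bound (M β r : ℝ) (n : ℕ) (hM : 1 ≤ M) (hβ1 : 1 ≤ M * β) (hβ2 : β ≤ M)
    (hn : 1 ≤ n) (hr : |r| ≤ 3) (ha : 1 ≤ 2 * M * ((n:ℝ) + β + r)) :
    Real.Gamma ((n:ℝ) + β + r)
      ≤ 1728 * M * (M + 3) ^ 3 * (n:ℝ) ^ r * Real.Gamma ((n:ℝ) + β) := by
  have hM0 : 0 < M := by linarith
  have hβ0 : 0 < β := by nlinarith
  have hn1 : (1:ℝ) ≤ (n:ℝ) := by exact_mod_cast hn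
  have hn0 : (0:ℝ) < (n:ℝ) := by linarith
  have hx : 0 < (n:ℝ) + β := by linarith
  have hGx : 0 < Real.Gamma ((n:ℝ) + β) := Real.Gamma_pos_of_pos hx
  have ha0 : 0 < (n:ℝ) + β + r := by nlinarith
  obtain ⟨hr1, hr2⟩ := abs_le.mp hr
  have hx2n : (n:ℝ) + β + 2 ≤ (M + 3) * (n:ℝ) := by nlinarith
  have h1M : (1:ℝ) ≤ M + 3 := by linarith
  have hM3 : ((M:ℝ) + 3) ^ (3:ℝ) = (M + 3) ^ (3:ℕ) := by
    rw [← Real.rpow_natCast (M+3) 3]; norm_num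
  have hnr0 : ∀ t : ℝ, 0 < (n:ℝ) ^ t := fun t => Real.rpow_pos_of_pos hn0 t
  rcases le_or_gt 0 r with hr0 | hr0
  · have key := gamma_step ((n:ℝ) + β) r hx hr0 hr2
    have h1 : ((n:ℝ) + β + 2) ^ r ≤ ((M + 3) * (n:ℝ)) ^ r :=
      Real.rpow_le_rpow (by positivity) hx2n hr0
    have h2 : ((M + 3) * (n:ℝ)) ^ r = (M + 3) ^ r * (n:ℝ) ^ r :=
      Real.mul_rpow (by linarith) (by linarith)
    have h3 : (M + 3) ^ r ≤ (M + 3) ^ (3:ℕ) := by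
      rw [← hM3]; exact Real.rpow_le_rpow_of_exponent_le h1M hr2
    calc Real.Gamma ((n:ℝ) + β + r) ≤ Real.Gamma ((n:ℝ) + β) * ((n:ℝ) + β + 2) ^ r := key
      _ ≤ Real.Gamma ((n:ℝ) + β) * ((M + 3) ^ (3:ℕ) * (n:ℝ) ^ r) := by
          refine mul_le_mul_of_nonneg_left ?_ hGx.le
          calc ((n:ℝ) + β + 2) ^ r ≤ ((M + 3) * (n:ℝ)) ^ r := h1
            _ = (M + 3) ^ r * (n:ℝ) ^ r := h2
            _ ≤ (M + 3) ^ (3:ℕ) * (n:ℝ) ^ r := mul_le_mul_of_nonneg_right h3 (hnr0 r).le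
      _ ≤ 1728 * M * (M + 3) ^ 3 * (n:ℝ) ^ r * Real.Gamma ((n:ℝ) + β) := by
          nlinarith [mul_pos (mul_pos (pow_pos (show (0:ℝ) < M + 3 by linarith) 3) (hnr0 r)) hGx]
  · -- negative r
    have h3s0 : (0:ℝ) ≤ 3 + r := by linarith
    have key := gamma_step ((n:ℝ) + β) (3 + r) hx h3s0 (by linarith)
    rw [show (n:ℝ) + β + (3 + r) = ((n:ℝ) + β + r) + 3 by ring] at key
    have hg3 : Real.Gamma ((n:ℝ) + β + r + 3)
        = ((n:ℝ)+β+r) * ((n:ℝ)+β+r+1) * ((n:ℝ)+β+r+2) * Real.Gamma ((n:ℝ)+β+r) := by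
      rw [show (n:ℝ)+β+r+3 = ((n:ℝ)+β+r+2)+1 by ring, Real.Gamma_add_one (by positivity),
        show (n:ℝ)+β+r+2 = ((n:ℝ)+β+r+1)+1 by ring, Real.Gamma_add_one (by positivity),
        Real.Gamma_add_one ha0.ne']
      ring
    rw [hg3] at key
    have hGa : 0 < Real.Gamma ((n:ℝ)+β+r) := Real.Gamma_pos_of_pos ha0
    have hP : 0 < ((n:ℝ)+β+r) * ((n:ℝ)+β+r+1) * ((n:ℝ)+β+r+2) := by positivity
    have hb1 : ((n:ℝ)+β+2) ^ (3+r) ≤ ((M+3)*(n:ℝ)) ^ (3+r) :=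
      Real.rpow_le_rpow (by positivity) hx2n h3s0
    have hb2 : ((M+3)*(n:ℝ)) ^ (3+r) = (M+3) ^ (3+r) * (n:ℝ) ^ (3+r) :=
      Real.mul_rpow (by linarith) (by linarith)
    have hb3 : (M+3) ^ (3+r) ≤ (M+3) ^ (3:ℕ) := by
      rw [← hM3]; exact Real.rpow_le_rpow_of_exponent_le h1M (by linarith)
    have hb4 : (n:ℝ) ^ (-r) * (n:ℝ) ^ (3+r) = (n:ℝ) ^ (3:ℕ) := by
      rw [← Real.rpow_add hn0, ← Real.rpow_natCast (n:ℝ) 3]; norm_num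
    have hcube : (n:ℝ) ^ (3:ℕ)
        ≤ 1728 * M * (((n:ℝ)+β+r) * ((n:ℝ)+β+r+1) * ((n:ℝ)+β+r+2)) :=
      cube_aux M ((n:ℝ)+β+r) (n:ℝ) hM hn0 ha0 ha (by linarith)
    have hnr : 0 < (n:ℝ) ^ (-r) := hnr0 (-r)
    have step1 := mul_le_mul_of_nonneg_right key hnr.le
    have step2 : (n:ℝ)^(-r) * ((n:ℝ)+β+2)^(3+r)
        ≤ 1728*M*(M+3)^3 * (((n:ℝ)+β+r) * ((n:ℝ)+β+r+1) * ((n:ℝ)+β+r+2)) := by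
      calc (n:ℝ)^(-r) * ((n:ℝ)+β+2)^(3+r)
          ≤ (n:ℝ)^(-r) * ((M+3)^(3:ℕ) * (n:ℝ)^(3+r)) := by
            refine mul_le_mul_of_nonneg_left ?_ hnr.le
            calc ((n:ℝ)+β+2)^(3+r) ≤ ((M+3)*(n:ℝ))^(3+r) := hb1
              _ = (M+3)^(3+r) * (n:ℝ)^(3+r) := hb2
              _ ≤ (M+3)^(3:ℕ) * (n:ℝ)^(3+r) :=
                  mul_le_mul_of_nonneg_right hb3 (hnr0 (3+r)).le
        _ = (M+3)^(3:ℕ) * ((n:ℝ)^(-r) * (n:ℝ)^(3+r)) := by ring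
        _ = (M+3)^(3:ℕ) * (n:ℝ)^(3:ℕ) := by rw [hb4]
        _ ≤ 1728*M*(M+3)^3 * (((n:ℝ)+β+r) * ((n:ℝ)+β+r+1) * ((n:ℝ)+β+r+2)) := by
            have := mul_le_mul_of_nonneg_left hcube
              (pow_nonneg (show (0:ℝ) ≤ M+3 by linarith) 3)
            linarith [this]
    have final : Real.Gamma ((n:ℝ)+β+r) * (n:ℝ)^(-r)
        ≤ 1728*M*(M+3)^3 * Real.Gamma ((n:ℝ)+β) := by
      have step3 := mul_le_mul_of_nonneg_left step2 hGx.le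
      set A := Real.Gamma ((n:ℝ)+β+r) with hA
      set X := Real.Gamma ((n:ℝ)+β) with hX
      set Q := (n:ℝ)^(-r) with hQ
      set E := ((n:ℝ)+β+2)^(3+r) with hE
      set P := ((n:ℝ)+β+r) * ((n:ℝ)+β+r+1) * ((n:ℝ)+β+r+2) with hPd
      refine le_of_mul_le_mul_left ?_ hP
      linarith [step1, step3]
    have hrr : (n:ℝ)^(-r) * (n:ℝ)^r = 1 := by rw [← Real.rpow_add hn0]; simp
    calc Real.Gamma ((n:ℝ)+β+r)
        = Real.Gamma ((n:ℝ)+β+r) * (n:ℝ)^(-r) * (n:ℝ)^r := by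
          rw [mul_assoc, hrr, mul_one]
      _ ≤ 1728*M*(M+3)^3 * Real.Gamma ((n:ℝ)+β) * (n:ℝ)^r :=
          mul_le_mul_of_nonneg_right final (hnr0 r).le
      _ = 1728*M*(M+3)^3 * (n:ℝ)^r * Real.Gamma ((n:ℝ)+β) := by ring


lemma gamma_moment_eval (μ r p : ℝ) (hp : 0 < p) (ha : 0 < p + r) :
    ∫ x in Set.Ioi (0:ℝ), (x - μ) ^ 2 * x ^ r * x ^ (p - 1) * Real.exp (-x) / Real.Gamma p
      = Real.Gamma (p + r) * ((p + r - μ) ^ 2 + (p + r)) / Real.Gamma p := by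
  have ha1 : (0:ℝ) < p + r + 1 := by linarith
  have ha2 : (0:ℝ) < p + r + 2 := by linarith
  have I0 := Real.GammaIntegral_convergent ha
  have I1 := Real.GammaIntegral_convergent ha1
  have I2 := Real.GammaIntegral_convergent ha2
  have J1 : IntegrableOn (fun x => 2 * μ * (Real.exp (-x) * x ^ (p + r + 1 - 1)))
      (Set.Ioi (0:ℝ)) := I1.const_mul _
  have J0 : IntegrableOn (fun x => μ ^ 2 * (Real.exp (-x) * x ^ (p + r - 1)))
      (Set.Ioi (0:ℝ)) := I0.const_mul _
  have key : Set.EqOn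
      (fun x => (x - μ) ^ 2 * x ^ r * x ^ (p - 1) * Real.exp (-x) / Real.Gamma p)
      (fun x => (Real.Gamma p)⁻¹ *
        ((Real.exp (-x) * x ^ (p + r + 2 - 1) - 2 * μ * (Real.exp (-x) * x ^ (p + r + 1 - 1)))
          + μ ^ 2 * (Real.exp (-x) * x ^ (p + r - 1)))) (Set.Ioi 0) := by
    intro x hx
    have hx' : (0:ℝ) < x := hx
    have e1 : x ^ r * x ^ (p - 1) = x ^ (p + r - 1) := by
      rw [← Real.rpow_add hx']; ring_nf
    have e2 : x ^ (p + r + 1 - 1) = x * x ^ (p + r - 1) := by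
      rw [show p + r + 1 - 1 = 1 + (p + r - 1) by ring, Real.rpow_add hx', Real.rpow_one]
    have e3 : x ^ (p + r + 2 - 1) = x * x ^ (p + r + 1 - 1) := by
      rw [show p + r + 2 - 1 = 1 + (p + r + 1 - 1) by ring, Real.rpow_add hx', Real.rpow_one]
    simp only
    rw [e3, e2, ← e1]
    ring
  have ISub : IntegrableOn (fun x => Real.exp (-x) * x ^ (p + r + 2 - 1)
      - 2 * μ * (Real.exp (-x) * x ^ (p + r + 1 - 1))) (Set.Ioi (0:ℝ)) := I2.sub J1
  rw [setIntegral_congr_fun measurableSet_Ioi key, integral_const_mul,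
    integral_add ISub J0, integral_sub I2 J1, integral_const_mul, integral_const_mul,
    ← Real.Gamma_eq_integral ha, ← Real.Gamma_eq_integral ha1, ← Real.Gamma_eq_integral ha2]
  have G1 : Real.Gamma (p + r + 1) = (p + r) * Real.Gamma (p + r) := Real.Gamma_add_one ha.ne'
  have G2 : Real.Gamma (p + r + 2) = (p + r + 1) * Real.Gamma (p + r + 1) := by
    rw [show p + r + 2 = (p + r + 1) + 1 by ring, Real.Gamma_add_one ha1.ne']
  rw [G2, G1]
  ring

/-- For every `M ≥ 1` there is a constant `c = c(M)` such that for all real `β` with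
`M⁻¹ ≤ β ≤ M`, all integers `n ≥ 1`, and all real `r` with `|r| ≤ 3` and
`n + r ≥ −1/(2M²)`:
`∫_0^∞ (x − n)² x^r · x^{n+β−1} e^{−x} / Γ(n+β) dx ≤ c · n^{1+r}`,
i.e. `E((Γ_n − n)² Γ_n^r) ≤ c n^{1+r}` for a Gamma variable `Γ_n` with shape `n + β`. -/
theorem gamma_centered_moment_bound (M : ℝ) (hM : 1 ≤ M) :
    ∃ c : ℝ, 0 < c ∧ ∀ (β : ℝ), M⁻¹ ≤ β → β ≤ M → ∀ (n : ℕ), 1 ≤ n → ∀ (r : ℝ),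
      |r| ≤ 3 → -(1 / (2 * M ^ 2)) ≤ (n : ℝ) + r →
      (∫ x in Set.Ioi (0 : ℝ),
          (x - (n : ℝ)) ^ 2 * x ^ r * x ^ ((n : ℝ) + β - 1) * Real.exp (-x)
            / Real.Gamma ((n : ℝ) + β))
        ≤ c * (n : ℝ) ^ (1 + r) := by
  have hM0 : 0 < M := by linarith
  refine ⟨((M+3)^2 + M + 4) * (1728 * M * (M+3)^3), by positivity, ?_⟩
  intro β hβ1 hβ2 n hn r hr hnr
  have hβ0 : 0 < β := lt_of_lt_of_le (by positivity) hβ1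
  have hn1 : (1:ℝ) ≤ (n:ℝ) := by exact_mod_cast hn
  have hn0 : (0:ℝ) < (n:ℝ) := by linarith
  have hx : 0 < (n:ℝ) + β := by linarith
  have hβ1' : 1 ≤ M * β := by
    have := mul_le_mul_of_nonneg_left hβ1 hM0.le
    rwa [mul_inv_cancel₀ hM0.ne'] at this
  have hnr' : -1 ≤ ((n:ℝ) + r) * (2*M^2) := by
    have h2 : (0:ℝ) < 2*M^2 := by positivity
    have h3 := mul_le_mul_of_nonneg_right hnr h2.le
    have e : -(1/(2*M^2)) * (2*M^2) = -1 := by field_simp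
    rwa [e] at h3
  have ha : 1 ≤ 2 * M * ((n:ℝ) + β + r) := by
    nlinarith [hβ1', hnr', hM, hM0, mul_le_mul_of_nonneg_left hβ1' hM0.le]
  have ha0 : 0 < (n:ℝ) + β + r := by nlinarith [ha, hM0]
  have hGx : 0 < Real.Gamma ((n:ℝ)+β) := Real.Gamma_pos_of_pos hx
  have hGa : 0 < Real.Gamma ((n:ℝ)+β+r) := Real.Gamma_pos_of_pos ha0
  obtain ⟨hr1, hr2⟩ := abs_le.mp hr
  rw [gamma_moment_eval (n:ℝ) r ((n:ℝ)+β) hx ha0]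
  have ratio := gamma_ratio_bound M β r n hM hβ1' hβ2 hn hr ha
  have coeff : ((n:ℝ)+β+r-(n:ℝ))^2 + ((n:ℝ)+β+r) ≤ ((M+3)^2 + M + 4) * (n:ℝ) := by
    nlinarith [mul_nonneg (show (0:ℝ) ≤ M+3-β-r by linarith)
        (show (0:ℝ) ≤ M+3+β+r by linarith),
      mul_nonneg (show (0:ℝ) ≤ (n:ℝ)-1 by linarith) (sq_nonneg (M+3)),
      mul_nonneg (show (0:ℝ) ≤ (n:ℝ)-1 by linarith) (show (0:ℝ) ≤ M+3 by linarith)]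
  have hpow : (n:ℝ)^(1+r) = (n:ℝ) * (n:ℝ)^r := by
    rw [Real.rpow_add hn0, Real.rpow_one]
  rw [div_le_iff₀ hGx]
  calc Real.Gamma ((n:ℝ)+β+r) * (((n:ℝ)+β+r-(n:ℝ))^2 + ((n:ℝ)+β+r))
      ≤ (1728*M*(M+3)^3*(n:ℝ)^r * Real.Gamma ((n:ℝ)+β)) * (((M+3)^2 + M + 4)*(n:ℝ)) :=
        mul_le_mul ratio coeff (add_nonneg (sq_nonneg _) ha0.le)
          (mul_nonneg (by positivity) hGx.le)
    _ = ((M+3)^2 + M + 4) * (1728 * M * (M+3)^3) * ((n:ℝ) * (n:ℝ)^r)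
          * Real.Gamma ((n:ℝ)+β) := by ring
    _ = ((M+3)^2 + M + 4) * (1728 * M * (M+3)^3) * (n:ℝ)^(1+r)
          * Real.Gamma ((n:ℝ)+β) := by rw [hpow]
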